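/- Sufficiency of E-KKT conditions under strict exponential E-invexity: With the same setup as the weak case, suppose (E(ȳ), τ̄, ρ̄, ξ̄) satisfies the E-KKT conditions, each fᵢ is exponentially strictly E-invex at ȳ on Ω_E, each active gₖ is exponentially E-invex at ȳ on Ω_E, each hⱼ with ξ̄ⱼ > 0 is exponentially E-invex, and each −hⱼ with ξ̄ⱼ < 0 is exponentially E-invex (all with respect to the same η). Then E(ȳ) is an E-Pareto solution: there is no feasible E(x) with f(E(x)) ≤ f(E(ȳ)) componentwise and f(E(x)) ≠ f(E(ȳ)). -/

import Mathlib

/-!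
Put `v = η (E x) (E ȳ)` for a feasible `x` that dominates `ȳ`. Since `exp` is monotone, each
exponential invexity inequality, read at `x`, bounds a directional derivative along `v`: every
`fᵢ` strictly decreases (`x ≠ ȳ`), and every active `gₖ` and every `±hⱼ` weighted by a multiplier
of the right sign does not increase. Evaluating the E-KKT stationarity condition at `v` then gives
`0 < 0`.
-/

open Real

theorem neg_of_exp_sub_exp_gt_mul {a b d : ℝ} (hab : a ≤ b) (h : exp a - exp b > exp b * d) :
    d < 0 :=
  neg_of_mul_neg_right (h.trans_le (sub_nonpos.2 (exp_le_exp.2 hab))) (exp_pos b).le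

theorem nonpos_of_exp_sub_exp_ge_mul {a b d : ℝ} (hab : a ≤ b) (h : exp a - exp b ≥ exp b * d) :
    d ≤ 0 :=
  nonpos_of_mul_nonpos_right (h.trans (sub_nonpos.2 (exp_le_exp.2 hab))) (exp_pos b)

theorem mul_nonpos_of_complementary_slackness {ρ a b d : ℝ} (hρ : 0 ≤ ρ) (hslack : ρ * b = 0)
    (ha : a ≤ 0) (hinvex : b = 0 → exp a - exp b ≥ exp b * d) : ρ * d ≤ 0 := by
  rcases hρ.eq_or_lt with rfl | hρpos
  · rw [zero_mul]
  · have hb : b = 0 := (mul_eq_zero.1 hslack).resolve_left hρpos.ne'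
    subst hb
    exact mul_nonpos_of_nonneg_of_nonpos hρ (nonpos_of_exp_sub_exp_ge_mul ha (hinvex rfl))

theorem mul_nonpos_of_equality_constraint {ξ a b d : ℝ} (hab : a = b)
    (hpos : 0 < ξ → exp a - exp b ≥ exp b * d)
    (hneg : ξ < 0 → exp (-a) - exp (-b) ≥ exp (-b) * -d) : ξ * d ≤ 0 := by
  rcases lt_trichotomy ξ 0 with hξ | rfl | hξ
  · exact mul_nonpos_of_nonpos_of_nonneg hξ.le
      (neg_nonpos.1 (nonpos_of_exp_sub_exp_ge_mul (neg_le_neg hab.ge) (hneg hξ)))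
  · rw [zero_mul]
  · exact mul_nonpos_of_nonneg_of_nonpos hξ.le (nonpos_of_exp_sub_exp_ge_mul hab.le (hpos hξ))

theorem Finset.sum_mul_neg_of_nonneg_of_ne_zero {ι R : Type*} [Fintype ι] [Semiring R]
    [PartialOrder R] [IsStrictOrderedRing R] {τ a : ι → R}
    (hτ : ∀ i, 0 ≤ τ i) (hτne : τ ≠ 0) (ha : ∀ i, a i < 0) : ∑ i, τ i * a i < 0 := by
  obtain ⟨i, hi⟩ := Function.ne_iff.1 hτne
  exact Finset.sum_neg' (fun j _ => mul_nonpos_of_nonneg_of_nonpos (hτ j) (ha j).le)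
    ⟨i, Finset.mem_univ i, mul_neg_of_pos_of_neg ((hτ i).lt_of_ne' hi) (ha i)⟩

theorem EKKT_sufficiency_E_Pareto_general {n p m q : ℕ}
    (E : (Fin n → ℝ) → (Fin n → ℝ))
    (f : Fin p → (Fin n → ℝ) → ℝ) (g : Fin m → (Fin n → ℝ) → ℝ)
    (h : Fin q → (Fin n → ℝ) → ℝ)
    (η : (Fin n → ℝ) → (Fin n → ℝ) → (Fin n → ℝ))
    (ΩE : Set (Fin n → ℝ))
    (hΩE : ΩE = {x | (∀ k, g k (E x) ≤ 0) ∧ ∀ j, h j (E x) = 0})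
    (ybar : Fin n → ℝ) (hfeas : ybar ∈ ΩE)
    (τbar : Fin p → ℝ) (ρbar : Fin m → ℝ) (ξbar : Fin q → ℝ)
    (hstat : (∑ i, τbar i • fderiv ℝ (fun z => f i (E z)) ybar) +
        (∑ k, ρbar k • fderiv ℝ (fun z => g k (E z)) ybar) +
        (∑ j, ξbar j • fderiv ℝ (fun z => h j (E z)) ybar) = 0)
    (hslack : ∀ k, ρbar k * g k (E ybar) = 0)
    (hτ : ∀ i, 0 ≤ τbar i) (hτne : τbar ≠ 0) (hρ : ∀ k, 0 ≤ ρbar k)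
    (hfinvex : ∀ i, ∀ x ∈ ΩE, x ≠ ybar →
      exp (f i (E x)) - exp (f i (E ybar)) >
        exp (f i (E ybar)) * fderiv ℝ (fun z => f i (E z)) ybar (η (E x) (E ybar)))
    (hginvex : ∀ k, g k (E ybar) = 0 → ∀ x ∈ ΩE,
      exp (g k (E x)) - exp (g k (E ybar)) ≥
        exp (g k (E ybar)) * fderiv ℝ (fun z => g k (E z)) ybar (η (E x) (E ybar)))
    (hhinvex : ∀ j, 0 < ξbar j → ∀ x ∈ ΩE,
      exp (h j (E x)) - exp (h j (E ybar)) ≥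
        exp (h j (E ybar)) * fderiv ℝ (fun z => h j (E z)) ybar (η (E x) (E ybar)))
    (hnhinvex : ∀ j, ξbar j < 0 → ∀ x ∈ ΩE,
      exp (-h j (E x)) - exp (-h j (E ybar)) ≥
        exp (-h j (E ybar)) * fderiv ℝ (fun z => -h j (E z)) ybar (η (E x) (E ybar))) :
    ¬ ∃ x ∈ ΩE, (∀ i, f i (E x) ≤ f i (E ybar)) ∧ (∃ i, f i (E x) < f i (E ybar)) := by
  rintro ⟨x, hx, hle, _, hlt⟩
  have hxy : x ≠ ybar := by rintro rfl; exact lt_irrefl _ hlt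
  obtain ⟨hgx, hhx⟩ := hΩE ▸ hx
  obtain ⟨-, hhy⟩ := hΩE ▸ hfeas
  have hstatv := congrArg (fun L : (Fin n → ℝ) →L[ℝ] ℝ => L (η (E x) (E ybar))) hstat
  simp only [add_apply, sum_apply, smul_apply, smul_eq_mul, zero_apply] at hstatv
  have hf := Finset.sum_mul_neg_of_nonneg_of_ne_zero hτ hτne fun i =>
    neg_of_exp_sub_exp_gt_mul (hle i) (hfinvex i x hx hxy)
  have hg := Finset.sum_nonpos fun k (_ : k ∈ Finset.univ) =>
    mul_nonpos_of_complementary_slackness (hρ k) (hslack k) (hgx k) fun hk => hginvex k hk x hx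
  have hh := Finset.sum_nonpos fun j (_ : j ∈ Finset.univ) =>
    mul_nonpos_of_equality_constraint ((hhx j).trans (hhy j).symm) (hhinvex j · x hx)
      fun hj => by simpa only [fderiv_fun_neg, neg_apply] using hnhinvex j hj x hx
  linarith

theorem EKKT_sufficiency_E_Pareto {n p m q : ℕ}
    (E : (Fin n → ℝ) → (Fin n → ℝ))
    (f : Fin p → (Fin n → ℝ) → ℝ) (g : Fin m → (Fin n → ℝ) → ℝ)
    (h : Fin q → (Fin n → ℝ) → ℝ)
    (η : (Fin n → ℝ) → (Fin n → ℝ) → (Fin n → ℝ))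
    (hE : Function.Bijective E)
    (ΩE : Set (Fin n → ℝ))
    (hΩE : ΩE = {x | (∀ k, g k (E x) ≤ 0) ∧ ∀ j, h j (E x) = 0})
    (ybar : Fin n → ℝ) (hfeas : ybar ∈ ΩE)
    (τbar : Fin p → ℝ) (ρbar : Fin m → ℝ) (ξbar : Fin q → ℝ)
    (hdf : ∀ i, DifferentiableAt ℝ (fun z => f i (E z)) ybar)
    (hdg : ∀ k, DifferentiableAt ℝ (fun z => g k (E z)) ybar)
    (hdh : ∀ j, DifferentiableAt ℝ (fun z => h j (E z)) ybar)
    (hstat : (∑ i, τbar i • fderiv ℝ (fun z => f i (E z)) ybar) +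
        (∑ k, ρbar k • fderiv ℝ (fun z => g k (E z)) ybar) +
        (∑ j, ξbar j • fderiv ℝ (fun z => h j (E z)) ybar) = 0)
    (hslack : ∀ k, ρbar k * g k (E ybar) = 0)
    (hτ : ∀ i, 0 ≤ τbar i) (hτne : τbar ≠ 0) (hρ : ∀ k, 0 ≤ ρbar k)
    (hfinvex : ∀ i, ∀ x ∈ ΩE, x ≠ ybar →
      exp (f i (E x)) - exp (f i (E ybar)) >
        exp (f i (E ybar)) * fderiv ℝ (fun z => f i (E z)) ybar (η (E x) (E ybar)))
    (hginvex : ∀ k, g k (E ybar) = 0 → ∀ x ∈ ΩE,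
      exp (g k (E x)) - exp (g k (E ybar)) ≥
        exp (g k (E ybar)) * fderiv ℝ (fun z => g k (E z)) ybar (η (E x) (E ybar)))
    (hhinvex : ∀ j, 0 < ξbar j → ∀ x ∈ ΩE,
      exp (h j (E x)) - exp (h j (E ybar)) ≥
        exp (h j (E ybar)) * fderiv ℝ (fun z => h j (E z)) ybar (η (E x) (E ybar)))
    (hnhinvex : ∀ j, ξbar j < 0 → ∀ x ∈ ΩE,
      exp (-h j (E x)) - exp (-h j (E ybar)) ≥
        exp (-h j (E ybar)) * fderiv ℝ (fun z => -h j (E z)) ybar (η (E x) (E ybar))) :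
    ¬ ∃ x ∈ ΩE, (∀ i, f i (E x) ≤ f i (E ybar)) ∧ (∃ i, f i (E x) < f i (E ybar)) :=
  EKKT_sufficiency_E_Pareto_general E f g h η ΩE hΩE ybar hfeas τbar ρbar ξbar hstat hslack hτ hτne
    hρ hfinvex hginvex hhinvex hnhinvex
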